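/- Let x, y ∈ D_loc(S), t ≥ 0 and K ⊂ S compact. If ρ̃_{t,K}(x,y) ≤ 1/9, then ρ_{t,K}(x,y) ≤ 6 · ( √(ρ̃_{t,K}(x,y)) ∨ ω'_{t,K,x}(√(ρ̃_{t,K}(x,y))) ). -/

import Mathlib

open Filter Topology Set MeasureTheory
open scoped ENNReal NNReal

noncomputable section

namespace LocSkor

/-- Paths with values in the one-point compactification. -/
abbrev Path (S : Type*) := ℝ → OnePoint S

variable {S : Type*} [TopologicalSpace S]

/-- Distance between two points of `S^Δ`, with junk value `0` if one of them is `Δ`. -/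
noncomputable def dd (ρ : S → S → ℝ) : OnePoint S → OnePoint S → ℝ :=
  fun a b => Option.elim (show Option S from a) 0
    (fun a' => Option.elim (show Option S from b) 0 (fun b' => ρ a' b'))

/-- The set of times at which the path has already exploded. -/
def xiSet (x : Path S) : Set ℝ := {t : ℝ | x t = OnePoint.infty}

/-- The path explodes in finite time, i.e. `ξ(x) < ∞`. -/
def explodes (x : Path S) : Prop := (xiSet x).Nonempty

/-- The (real-valued) explosion time `ξ(x)`; junk value `0` if the path never explodes. -/
def xiR (x : Path S) : ℝ := sInf (xiSet x)

/-- The `[0,∞]`-valued explosion time `ξ(x)`. -/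
def xiE (x : Path S) : ℝ≥0∞ := ⨅ t ∈ xiSet x, ENNReal.ofReal t

/-- The range `{x_s, 0 ≤ s < ξ(x)}` of the path, as a subset of `S`. -/
def pathRange (x : Path S) : Set S := {a : S | ∃ s : ℝ, 0 ≤ s ∧ x s = (a : OnePoint S)}

/-- `x` is an exploding cadlag path: `x_t = Δ` exactly for `t ≥ ξ(x)` (and we normalize
`x` on negative times), `x` is right-continuous before explosion, and has left limits in `S`
at every point of `(0, ξ(x))`. -/
def IsDexp (x : Path S) : Prop :=
  (∀ t ≤ (0:ℝ), x t = x 0) ∧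
  (∀ ⦃s t : ℝ⦄, s ≤ t → x s = OnePoint.infty → x t = OnePoint.infty) ∧
  IsClosed (xiSet x) ∧
  (∀ t : ℝ, 0 ≤ t → x t ≠ OnePoint.infty → Tendsto x (𝓝[>] t) (𝓝 (x t))) ∧
  (∀ t : ℝ, 0 < t → x t ≠ OnePoint.infty →
    ∃ a : S, Tendsto x (𝓝[<] t) (𝓝 (a : OnePoint S)))

/-- `x` belongs to the local cadlag space `𝔻_loc(S)`. -/
def IsDloc (x : Path S) : Prop :=
  IsDexp x ∧
  ((explodes x ∧ 0 < xiR x ∧ IsCompact (closure (pathRange x))) →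
    ∃ a : S, Tendsto x (𝓝[<] xiR x) (𝓝 (a : OnePoint S)))

/-- `x` belongs to the global cadlag space `𝔻(S)`, i.e. `ξ(x) = ∞`. -/
def IsDglob (x : Path S) : Prop := IsDexp x ∧ ∀ t : ℝ, x t ≠ OnePoint.infty

/-- `x` is a cadlag path with values in the compact space `S^Δ`, i.e. `x ∈ 𝔻(S^Δ)`. -/
def IsCadlagDelta (x : Path S) : Prop :=
  (∀ t ≤ (0:ℝ), x t = x 0) ∧
  (∀ t : ℝ, 0 ≤ t → Tendsto x (𝓝[>] t) (𝓝 (x t))) ∧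
  (∀ t : ℝ, 0 < t → ∃ a : OnePoint S, Tendsto x (𝓝[<] t) (𝓝 a))

/-- The space `𝔻_exp(S)` of exploding cadlag paths. -/
def DexpT (S : Type*) [TopologicalSpace S] : Type _ := {x : Path S // IsDexp x}

/-- The space `𝔻_loc(S)`. -/
def DlocT (S : Type*) [TopologicalSpace S] : Type _ := {x : Path S // IsDloc x}

/-- The space `𝔻(S)`. -/
def DglobT (S : Type*) [TopologicalSpace S] : Type _ := {x : Path S // IsDglob x}

/-- The space `𝔻(S^Δ)`. -/
def DDeltaT (S : Type*) [TopologicalSpace S] : Type _ := {x : Path S // IsCadlagDelta x}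

/-! ### Time changes `Λ̃` and `Λ` -/

/-- `l` is an increasing bijection of `ℝ₊` (extended by the identity on negative reals):
the class `Λ̃`. -/
def IsTimeBij (l : ℝ → ℝ) : Prop :=
  StrictMono l ∧ Function.Surjective l ∧ ∀ t ≤ (0:ℝ), l t = t

/-- `‖log λ̇‖_t ≤ ε`, expressed through slopes. -/
def LogSlopeLe (l : ℝ → ℝ) (t ε : ℝ) : Prop :=
  ∀ s₁ s₂ : ℝ, 0 ≤ s₁ → s₁ < s₂ → s₂ ≤ t → |Real.log ((l s₂ - l s₁) / (s₂ - s₁))| ≤ ε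

/-- `‖λ - id‖_t ≤ ε`. -/
def IdDistLe (l : ℝ → ℝ) (t ε : ℝ) : Prop := ∀ s : ℝ, 0 ≤ s → s ≤ t → |l s - s| ≤ ε

/-- `l` belongs to the class `Λ` of increasing bijections of `ℝ₊` which are locally
Lipschitz together with their inverses (equivalently, `‖log λ̇‖_t < ∞` for all `t`). -/
def IsLipTimeBij (l : ℝ → ℝ) : Prop :=
  IsTimeBij l ∧ ∀ t : ℝ, 0 < t → ∃ C : ℝ, LogSlopeLe l t C

/-- `ξ(x) < ∞` together with the relative compactness in `S` of `{x_s, s < ξ(x)}`. -/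
def Case1 (x : Path S) : Prop := explodes x ∧ IsCompact (closure (pathRange x))

/-- Convergence criterion of Theorem 2.6, parametrized by the class of time changes and
by the norm used on them. -/
def ConvGen (ρ : S → S → ℝ) (Lam : (ℝ → ℝ) → Prop) (Nrm : (ℝ → ℝ) → ℝ → ℝ → Prop)
    (xk : ℕ → Path S) (x : Path S) : Prop :=
  ∃ l : ℕ → ℝ → ℝ, (∀ k, Lam (l k)) ∧
    (Case1 x →
      ((∀ᶠ k in atTop, ∀ s : ℝ, 0 ≤ s → s < l k (xiR x) → xk k s ≠ OnePoint.infty) ∧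
      (∀ ε > (0:ℝ), ∀ᶠ k in atTop, ∀ s : ℝ, 0 ≤ s → s < xiR x →
        dd ρ (x s) (xk k (l k s)) ≤ ε) ∧
      Tendsto (fun k => xk k (l k (xiR x))) atTop (𝓝 (OnePoint.infty : OnePoint S)) ∧
      (∀ ε > (0:ℝ), ∀ᶠ k in atTop, Nrm (l k) (xiR x) ε))) ∧
    (¬ Case1 x →
      ∀ t : ℝ, 0 ≤ t → x t ≠ OnePoint.infty →
        ((∀ᶠ k in atTop, xk k (l k t) ≠ OnePoint.infty) ∧
        (∀ ε > (0:ℝ), ∀ᶠ k in atTop, ∀ s : ℝ, 0 ≤ s → s ≤ t →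
          dd ρ (x s) (xk k (l k s)) ≤ ε) ∧
        (∀ ε > (0:ℝ), ∀ᶠ k in atTop, Nrm (l k) t ε)))

/-- Convergence criterion of Theorem 2.6 (with `Λ` and `‖log λ̇‖`). -/
def ConvLoc (ρ : S → S → ℝ) (xk : ℕ → Path S) (x : Path S) : Prop :=
  ConvGen ρ IsLipTimeBij LogSlopeLe xk x

/-- Convergence criterion of Theorem 2.7 (with `Λ̃` and `‖λ - id‖`). -/
def ConvLocTilde (ρ : S → S → ℝ) (xk : ℕ → Path S) (x : Path S) : Prop :=
  ConvGen ρ IsTimeBij IdDistLe xk x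

/-! ### σ-algebras -/

/-- The Borel σ-algebra of `S^Δ`. -/
def msOP (S : Type*) [TopologicalSpace S] : MeasurableSpace (OnePoint S) := borel _

/-- The σ-algebra `𝓕_t = σ(X_s, 0 ≤ s ≤ t)`. -/
def filt {α : Type*} (ev : α → Path S) (t : ℝ) : MeasurableSpace α :=
  ⨆ s ∈ Icc (0:ℝ) t, MeasurableSpace.comap (fun x => ev x s) (msOP S)

/-- The σ-algebra `𝓕_{t-} = σ(X_s, 0 ≤ s < t)`. -/
def filtLt {α : Type*} (ev : α → Path S) (t : ℝ) : MeasurableSpace α :=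
  ⨆ s ∈ Ico (0:ℝ) t, MeasurableSpace.comap (fun x => ev x s) (msOP S)

/-- The σ-algebra `𝓕 = σ(X_s, 0 ≤ s < ∞)`. -/
def filtAll {α : Type*} (ev : α → Path S) : MeasurableSpace α :=
  ⨆ s ∈ Ici (0:ℝ), MeasurableSpace.comap (fun x => ev x s) (msOP S)

/-- The σ-algebra `𝓕_{t+} = ⋂_{s>t} 𝓕_s`. -/
def filtPlus {α : Type*} (ev : α → Path S) (t : ℝ) : MeasurableSpace α :=
  ⨅ s ∈ Ioi t, filt ev s

/-- `τ` is an `(𝓕_t)`-stopping time. -/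
def IsStopping {α : Type*} (ev : α → Path S) (τ : α → ℝ≥0∞) : Prop :=
  ∀ t : ℝ, 0 ≤ t → MeasurableSet[filt ev t] {x | τ x ≤ ENNReal.ofReal t}

open Classical in
/-- Evaluation of a path at a `[0,∞]`-valued time (`Δ` at time `∞`). -/
def evalE (x : Path S) (t : ℝ≥0∞) : OnePoint S :=
  if t = ⊤ then OnePoint.infty else x t.toReal

open Classical in
/-- The left limit `x_{t-}`, junk value `Δ` if it does not exist. -/
def leftLimVal (x : Path S) (t : ℝ) : OnePoint S :=
  if h : ∃ a : OnePoint S, Tendsto x (𝓝[<] t) (𝓝 a) then h.choose else OnePoint.infty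

/-- The exit time `τ^U = inf {t ≥ 0 | X_{t-} ∉ U or X_t ∉ U}`. -/
def tauU (U : Set S) (x : Path S) : ℝ≥0∞ :=
  ⨅ t ∈ {t : ℝ | 0 ≤ t ∧
      ((0 < t ∧ ¬ ∃ a ∈ U, Tendsto x (𝓝[<] t) (𝓝 (a : OnePoint S))) ∨
        ¬ ∃ a ∈ U, x t = (a : OnePoint S))},
    ENNReal.ofReal t

/-! ### The modulus `ω'` -/

/-- The modulus of continuity `ω'_{t,K,x}(δ)` of (2.5), with values in `[0,∞]`. -/
def omegaMod (ρ : S → S → ℝ) (t : ℝ) (K : Set S) (x : Path S) (δ : ℝ) : ℝ≥0∞ :=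
  ⨅ (p : ℕ × (ℕ → ℝ)) (_ : p.2 0 = 0 ∧ (∀ i < p.1, p.2 i + δ < p.2 (i + 1)) ∧
      (∀ s : ℝ, 0 ≤ s → s < p.2 p.1 → x s ≠ OnePoint.infty) ∧
      ¬ (p.2 p.1 ≤ t ∧ ∃ a ∈ K, x (p.2 p.1) = (a : OnePoint S))),
    ⨆ (i : ℕ) (_ : i < p.1) (s₁ : ℝ) (_ : p.2 i ≤ s₁ ∧ s₁ < p.2 (i + 1))
      (s₂ : ℝ) (_ : p.2 i ≤ s₂ ∧ s₂ < p.2 (i + 1)),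
      ENNReal.ofReal (dd ρ (x s₁) (x s₂))

/-! ### Skorokhod pseudo-metrics -/

open Classical in
/-- The penalty term `d(x_{t₁}, K^c) ∧ (t - t₁)_+ 𝟙_{t₁ < ξ(x)}` appearing in the
definition of the pseudo-metrics (with the convention `d(a, ∅) = +∞`). -/
noncomputable def pen (ρ : S → S → ℝ) (t : ℝ) (K : Set S) (x : Path S) (t₁ : ℝ) : ℝ :=
  Option.elim (show Option S from x t₁) 0 (fun a =>
    if (Kᶜ : Set S).Nonempty then min (sInf ((fun b => ρ a b) '' (Kᶜ : Set S))) (max (t - t₁) 0)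
    else max (t - t₁) 0)

open Classical in
/-- The set of admissible bounds in the definition of `ρ̃_{t,K}` (`useLip = false`) and of
`ρ_{t,K}` (`useLip = true`). -/
def rhoSet (useLip : Bool) (ρ : S → S → ℝ) (t : ℝ) (K : Set S) (x y : Path S) : Set ℝ :=
  {r : ℝ | 0 ≤ r ∧ ∃ t₁ t₂ : ℝ, ∃ l : ℝ → ℝ, 0 ≤ t₁ ∧ 0 ≤ t₂ ∧ l t₁ = t₂ ∧
    (if useLip then IsLipTimeBij l else IsTimeBij l) ∧
    (∀ s : ℝ, 0 ≤ s → s < t₁ → x s ≠ OnePoint.infty) ∧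
    (∀ s : ℝ, 0 ≤ s → s < t₂ → y s ≠ OnePoint.infty) ∧
    (∀ s : ℝ, 0 ≤ s → s < t₁ → dd ρ (x s) (y (l s)) ≤ r) ∧
    IdDistLe l t₁ r ∧
    (useLip = true → LogSlopeLe l t₁ r) ∧
    pen ρ t K x t₁ ≤ r ∧ pen ρ t K y t₂ ≤ r}

/-- The pseudo-metric `ρ̃_{t,K}`. -/
noncomputable def rhoTilde (ρ : S → S → ℝ) (t : ℝ) (K : Set S) (x y : Path S) : ℝ :=
  sInf (rhoSet false ρ t K x y)

/-- The pseudo-metric `ρ_{t,K}`. -/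
noncomputable def rhoMet (ρ : S → S → ℝ) (t : ℝ) (K : Set S) (x y : Path S) : ℝ :=
  sInf (rhoSet true ρ t K x y)

/-! ### Time change -/

/-- `g ∈ C^{≠0}(S, ℝ₊)`: `{g = 0}` is closed and `g` is continuous on `{g ≠ 0}`. -/
def Czero (g : S → ℝ) : Prop :=
  (∀ a : S, 0 ≤ g a) ∧ IsClosed {a : S | g a = 0} ∧ ContinuousOn g {a : S | g a ≠ 0}

/-- `g ∈ C̃^{≠0}(S, ℝ₊)`: moreover `g` is bounded on every compact subset of `S`. -/
def CzeroLocBdd (g : S → ℝ) : Prop :=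
  Czero g ∧ ∀ K : Set S, IsCompact K → ∃ C : ℝ, ∀ a ∈ K, g a ≤ C

/-- `g` extended to `S^Δ` by the junk value `0` at `Δ`. -/
def gOP (g : S → ℝ) : OnePoint S → ℝ := fun a => Option.elim (show Option S from a) 0 g

open Classical in
/-- The additive functional `A^g_t(x) = ∫_0^t du / g(x_u)` for `t ∈ [0, τ^{{g≠0}}(x)]`,
and `+∞` otherwise. -/
noncomputable def Ag (g : S → ℝ) (x : Path S) (t : ℝ) : ℝ≥0∞ :=
  if 0 ≤ t ∧ ENNReal.ofReal t ≤ tauU {a : S | g a ≠ 0} x then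
    ∫⁻ u in Ioo (0:ℝ) t, (ENNReal.ofReal (gOP g (x u)))⁻¹
  else ⊤

/-- The time change `τ^g_t(x) = inf {s ≥ 0 | A^g_s(x) ≥ t}`, for `t ∈ [0,∞]`. -/
noncomputable def taug (g : S → ℝ) (x : Path S) (t : ℝ≥0∞) : ℝ≥0∞ :=
  ⨅ s ∈ {s : ℝ | 0 ≤ s ∧ t ≤ Ag g x s}, ENNReal.ofReal s

/-- The total mass `A^g_{τ^g_∞(x)}(x) = ∫_0^{τ^{{g≠0}}(x)} du / g(x_u)`. -/
noncomputable def Atotal (g : S → ℝ) (x : Path S) : ℝ≥0∞ :=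
  ∫⁻ u in {u : ℝ | 0 < u ∧ ENNReal.ofReal u ≤ tauU {a : S | g a ≠ 0} x},
    (ENNReal.ofReal (gOP g (x u)))⁻¹

/-- The filter of times converging to `t ∈ [0,∞]` from the left. -/
noncomputable def leftFilter (t : ℝ≥0∞) : Filter ℝ := if t = ⊤ then atTop else 𝓝[<] t.toReal

open Classical in
/-- The left limit `x_{t-}` at a `[0,∞]`-valued time, junk value `Δ` if it does not exist. -/
noncomputable def leftLimValE (x : Path S) (t : ℝ≥0∞) : OnePoint S :=
  if h : ∃ a : OnePoint S, Tendsto x (leftFilter t) (𝓝 a) then h.choose else OnePoint.infty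

open Classical in
/-- The time-changed path `g·x` of Definition 3.1.  -/
noncomputable def timeChange (g : S → ℝ) (x : Path S) : Path S := fun t =>
  if 0 ≤ t ∧ Atotal g x ≤ ENNReal.ofReal t ∧
      ∃ a : S, g a = 0 ∧ Tendsto x (leftFilter (tauU {b : S | g b ≠ 0} x)) (𝓝 (a : OnePoint S))
  then leftLimValE x (tauU {b : S | g b ≠ 0} x)
  else evalE x (taug g x (ENNReal.ofReal t))

/-- The constant path equal to `Δ`. -/
def deadPath (S : Type*) [TopologicalSpace S] : Path S := fun _ => OnePoint.infty

lemma isDexp_deadPath : IsDexp (deadPath S) := by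
  refine ⟨fun _ _ => rfl, fun _ _ _ _ => rfl, ?_, ?_, ?_⟩
  · have : xiSet (deadPath S) = univ := by ext t; simp [xiSet, deadPath]
    rw [this]; exact isClosed_univ
  · intro t _ h; exact absurd rfl h
  · intro t _ h; exact absurd rfl h

lemma isDloc_deadPath : IsDloc (deadPath S) := by
  refine ⟨isDexp_deadPath, ?_⟩
  rintro ⟨-, hxi, -⟩
  exfalso
  have huniv : xiSet (deadPath S) = univ := by ext t; simp [xiSet, deadPath]
  have : xiR (deadPath S) = 0 := by
    rw [xiR, huniv]
    exact Real.sInf_of_not_bddBelow (by simp [not_bddBelow_univ (α := ℝ)])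
  rw [this] at hxi; exact lt_irrefl 0 hxi

lemma isCadlagDelta_deadPath : IsCadlagDelta (deadPath S) :=
  ⟨fun _ _ => rfl, fun _ _ => tendsto_const_nhds, fun _ _ => ⟨OnePoint.infty, tendsto_const_nhds⟩⟩

open Classical in
/-- Packaging of a raw path as an element of `𝔻_loc(S)` (junk value if it is not one). -/
noncomputable def toDloc (y : Path S) : DlocT S :=
  if h : IsDloc y then ⟨y, h⟩ else ⟨deadPath S, isDloc_deadPath⟩

open Classical in
/-- Packaging of a raw path as an element of `𝔻(S^Δ)` (junk value if it is not one). -/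
noncomputable def toDDelta (y : Path S) : DDeltaT S :=
  if h : IsCadlagDelta y then ⟨y, h⟩ else ⟨deadPath S, isCadlagDelta_deadPath⟩

/-- Condition defining the continuity set `B` of Theorem 3.3, for a pair `(g, x)`. -/
def BCond (g : S → ℝ) (x : Path S) : Prop :=
  (tauU {a : S | g a ≠ 0} x < xiE x →
    ∀ t : ℝ, tauU {a : S | g a ≠ 0} x < ENNReal.ofReal t →
      ∫⁻ u in Ioo (0:ℝ) t, (ENNReal.ofReal (gOP g (x u)))⁻¹ = ⊤) ∧
  (Atotal g x < ⊤ →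
    ∀ a : S, tauU {a : S | g a ≠ 0} x ≠ ⊤ →
      Tendsto x (𝓝[<] (tauU {a : S | g a ≠ 0} x).toReal) (𝓝 (a : OnePoint S)) →
      g a = 0 → x ((tauU {a : S | g a ≠ 0} x).toReal) = (a : OnePoint S))

/-- `x_{ξ(x)-}` exists in `U` whenever `0 < ξ(x) < ∞`. -/
def limExistsIn (U : Set S) (y : Path S) : Prop :=
  (explodes y ∧ 0 < xiR y) → ∃ a ∈ U, Tendsto y (𝓝[<] xiR y) (𝓝 (a : OnePoint S))

/-! ### Global Skorokhod convergence -/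

/-- Convergence in the global Skorokhod topology of `𝔻(S)` (Corollary 2.7). -/
def ConvGlob (ρ : S → S → ℝ) (xk : ℕ → Path S) (x : Path S) : Prop :=
  ∃ l : ℕ → ℝ → ℝ, (∀ k, IsLipTimeBij (l k)) ∧ ∀ t : ℝ, 0 ≤ t →
    (∀ ε > (0:ℝ), ∀ᶠ k in atTop, ∀ s : ℝ, 0 ≤ s → s ≤ t → dd ρ (x s) (xk k (l k s)) ≤ ε) ∧
    (∀ ε > (0:ℝ), ∀ᶠ k in atTop, LogSlopeLe (l k) t ε)

/-- Convergence in the global Skorokhod topology of `𝔻(S^Δ)`, written with entourages of the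
(unique) uniformity of the compact space `S^Δ` (equivalently, with any compatible metric). -/
def ConvGlobDelta (xk : ℕ → Path S) (x : Path S) : Prop :=
  ∃ l : ℕ → ℝ → ℝ, (∀ k, IsTimeBij (l k)) ∧ ∀ t : ℝ, 0 ≤ t →
    (∀ V ∈ 𝓝ˢ (Set.diagonal (OnePoint S)), ∀ᶠ k in atTop,
      ∀ s : ℝ, 0 ≤ s → s ≤ t → ((x s, xk k (l k s)) : OnePoint S × OnePoint S) ∈ V) ∧
    (∀ ε > (0:ℝ), ∀ᶠ k in atTop, IdDistLe (l k) t ε)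

/-! ### Markov families -/

/-- The shifted path `(X_{t₀+t})_{t≥0}`, at a `[0,∞]`-valued time `t₀`. -/
noncomputable def shiftE (x : Path S) (t₀ : ℝ≥0∞) : Path S := fun t =>
  if t₀ = ⊤ then OnePoint.infty else x (t₀.toReal + max t 0)

/-- Conditions a), b) in the definition of a Markov family (together with the
normalisation `P_Δ(ξ = 0) = 1`). -/
def MarkovBase {α : Type*} (ev : α → Path S)
    (P : OnePoint S → @Measure α (filtAll ev)) : Prop :=
  (∀ a : OnePoint S, @IsProbabilityMeasure α (filtAll ev) (P a)) ∧
  (∀ B : Set α, MeasurableSet[filtAll ev] B →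
    @Measurable S ℝ≥0∞ (borel S) inferInstance (fun a : S => P (a : OnePoint S) B)) ∧
  (∀ a : S, P (a : OnePoint S) {x | ev x 0 = (a : OnePoint S)} = 1) ∧
  (P OnePoint.infty {x | ev x 0 = OnePoint.infty} = 1)

/-- Condition c) in the definition of a `(𝓖_t)`-Markov family. -/
def MarkovProp {α : Type*} (ev : α → Path S) (G : ℝ → MeasurableSpace α)
    (P : OnePoint S → @Measure α (filtAll ev)) : Prop :=
  ∀ (a : OnePoint S) (t₀ : ℝ), 0 ≤ t₀ →
    ∀ B : Set (Path S), MeasurableSet[filtAll (id : Path S → Path S)] B →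
      ∀ A : Set α, MeasurableSet[G t₀] A →
        P a (A ∩ {x | (fun t => ev x (t₀ + max t 0)) ∈ B}) =
          ∫⁻ x in A, P (ev x t₀) {y | ev y ∈ B} ∂(P a)

/-- Condition c) for a `(𝓖_t)`-strong Markov family: the Markov property at every
`(𝓖_t)`-stopping time. -/
def StrongMarkovProp {α : Type*} (ev : α → Path S) (G : ℝ → MeasurableSpace α)
    (P : OnePoint S → @Measure α (filtAll ev)) : Prop :=
  ∀ (a : OnePoint S) (τ : α → ℝ≥0∞),
    (∀ t : ℝ, 0 ≤ t → MeasurableSet[G t] {x | τ x ≤ ENNReal.ofReal t}) →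
    ∀ B : Set (Path S), MeasurableSet[filtAll (id : Path S → Path S)] B →
      ∀ A : Set α, MeasurableSet[filtAll ev] A →
        (∀ t : ℝ, 0 ≤ t → MeasurableSet[G t] (A ∩ {x | τ x ≤ ENNReal.ofReal t})) →
        P a (A ∩ {x | shiftE (ev x) (τ x) ∈ B}) =
          ∫⁻ x in A, P (evalE (ev x) (τ x)) {y | ev y ∈ B} ∂(P a)

/-! Take `φ ∈ Λ̃` on `[0, t₁]` nearly realizing `ρ̃_{t,K}(x,y) = δ²`, at level `r`, and a partition
`0 = u₀ < ⋯ < u_N` of mesh `> δ` nearly realizing `ω'_{t,K,x}(δ)`. Stopping the partition at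
`min(t₁, u_N)` gives nodes of mesh `θ ≈ δ`, each new cell inside an old one. The piecewise linear
interpolation `λ` of `φ` at these nodes stays `r`-close to the identity and has slopes within
`2r/θ ≲ 2δ` of `1`, whence `‖log λ̇‖ ≲ -log (1 - 2δ) ≤ 6δ` as `δ ≤ 1/3`. As `λ` and `φ` agree at
the nodes, `λ_s = φ_σ` for some `σ` in the cell of `s`, so `d(x_s, y_{λ_s})` is at most
`d(x_s, x_σ) + d(x_σ, y_{φ_σ}) ≤ ω' + r`. -/

lemma monotoneOn_Iic_of_add_le {v : ℕ → ℝ} {n : ℕ} {θ : ℝ} (hθ : 0 ≤ θ)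
    (hgap : ∀ j < n, v j + θ ≤ v (j + 1)) : MonotoneOn v (Iic n) :=
  monotoneOn_of_le_add_one ordConnected_Iic fun j _ _ hj => by linarith [hgap j hj]

def ramp (a b s : ℝ) : ℝ := min s b - min s a

section Ramp

variable {a b s : ℝ}

lemma ramp_of_le (hab : a ≤ b) (hs : s ≤ a) : ramp a b s = 0 := by
  rw [ramp, min_eq_left hs, min_eq_left (hs.trans hab), sub_self]

lemma ramp_of_ge (hab : a ≤ b) (hs : b ≤ s) : ramp a b s = b - a := by
  rw [ramp, min_eq_right hs, min_eq_right (hab.trans hs)]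

lemma ramp_nonneg (hab : a ≤ b) : 0 ≤ ramp a b s := by
  simp only [ramp, min_def]
  split_ifs <;> linarith

lemma ramp_le (hab : a ≤ b) : ramp a b s ≤ b - a := by
  simp only [ramp, min_def]
  split_ifs <;> linarith

lemma monotone_ramp (hab : a ≤ b) : Monotone (ramp a b) := by
  intro s₁ s₂ hs
  simp only [ramp, min_def]
  split_ifs <;> linarith

end Ramp

def linInterp (n : ℕ) (v d : ℕ → ℝ) (s : ℝ) : ℝ :=
  ∑ j ∈ Finset.range n, (d (j + 1) - d j) / (v (j + 1) - v j) * ramp (v j) (v (j + 1)) s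

section LinInterp

variable {n : ℕ} {v d : ℕ → ℝ} {s : ℝ}

lemma linInterp_succ :
    linInterp (n + 1) v d s =
      linInterp n v d s + (d (n + 1) - d n) / (v (n + 1) - v n) * ramp (v n) (v (n + 1)) s :=
  Finset.sum_range_succ _ _

lemma linInterp_eq_of_le_node (hv : ∀ j < n, v j < v (j + 1)) {k : ℕ} (hk : k ≤ n)
    (hs : s ≤ v k) : linInterp n v d s = linInterp k v d s := by
  have hmono := monotoneOn_Iic_of_add_le le_rfl fun j hj => by simpa using (hv j hj).le
  induction n, hk using Nat.le_induction with
  | base => rfl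
  | succ m hkm ih =>
    have hvm : v k ≤ v m := hmono (mem_Iic.2 (by omega)) (mem_Iic.2 (by omega)) hkm
    rw [linInterp_succ, ramp_of_le (hv m (by omega)).le (hs.trans hvm), mul_zero, add_zero,
      ih (fun j hj => hv j (by omega)) (hmono.mono (Iic_subset_Iic.2 (by omega)))]

lemma linInterp_of_le_first (hv : ∀ j < n, v j < v (j + 1)) (hs : s ≤ v 0) :
    linInterp n v d s = 0 := by
  rw [linInterp_eq_of_le_node hv (Nat.zero_le n) hs, linInterp, Finset.sum_range_zero]

lemma linInterp_of_ge_last (hv : ∀ j < n, v j < v (j + 1)) (hs : v n ≤ s) :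
    linInterp n v d s = d n - d 0 := by
  induction n with
  | zero => simp [linInterp]
  | succ m ih =>
    have hvm := hv m (by omega)
    rw [linInterp_succ, ih (fun j hj => hv j (by omega)) (hvm.le.trans hs),
      ramp_of_ge hvm.le hs, div_mul_cancel₀ _ (sub_ne_zero.2 hvm.ne')]
    ring

lemma linInterp_node (hv : ∀ j < n, v j < v (j + 1)) {k : ℕ} (hk : k ≤ n) :
    linInterp n v d (v k) = d k - d 0 := by
  rw [linInterp_eq_of_le_node hv hk le_rfl,
    linInterp_of_ge_last (fun j hj => hv j (by omega)) le_rfl]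

lemma abs_linInterp_le (hv : ∀ j < n, v j < v (j + 1)) {r : ℝ} (hd0 : d 0 = 0)
    (hd : ∀ j ≤ n, |d j| ≤ r) : |linInterp n v d s| ≤ r := by
  induction n with
  | zero => simpa [linInterp] using (abs_nonneg _).trans (hd 0 le_rfl)
  | succ m ih =>
    have hv' : ∀ j < m, v j < v (j + 1) := fun j hj => hv j (by omega)
    rcases le_total s (v m) with hs | hs
    · rw [linInterp_eq_of_le_node hv (Nat.le_succ m) hs]
      exact ih hv' fun j hj => hd j (by omega)
    have hvm := hv m (Nat.lt_succ_self m)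
    have hgap := sub_pos.2 hvm
    set α := ramp (v m) (v (m + 1)) s / (v (m + 1) - v m) with hα
    have hα0 : 0 ≤ α := div_nonneg (ramp_nonneg hvm.le) hgap.le
    have hα1 : α ≤ 1 := (div_le_one hgap).2 (ramp_le hvm.le)
    have hconv : linInterp (m + 1) v d s = (1 - α) * d m + α * d (m + 1) := by
      rw [linInterp_succ, linInterp_of_ge_last hv' hs, hd0, hα, div_mul_eq_mul_div,
        mul_div_assoc]
      ring
    rw [hconv]
    calc |(1 - α) * d m + α * d (m + 1)| ≤ (1 - α) * |d m| + α * |d (m + 1)| := by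
          refine (abs_add_le _ _).trans ?_
          rw [abs_mul, abs_mul, abs_of_nonneg (by linarith : (0 : ℝ) ≤ 1 - α), abs_of_nonneg hα0]
      _ ≤ (1 - α) * r + α * r :=
          add_le_add (mul_le_mul_of_nonneg_left (hd m (by omega)) (by linarith))
            (mul_le_mul_of_nonneg_left (hd (m + 1) le_rfl) hα0)
      _ = r := by ring

lemma lipschitzWith_linInterp (hv : ∀ j < n, v j < v (j + 1)) {K : ℝ≥0}
    (hK : ∀ j < n, |(d (j + 1) - d j) / (v (j + 1) - v j)| ≤ K) :
    LipschitzWith K (linInterp n v d) := by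
  have key : ∀ s₁ s₂, s₁ ≤ s₂ → |linInterp n v d s₂ - linInterp n v d s₁| ≤ K * (s₂ - s₁) := by
    intro s₁ s₂ hs
    have hramp : ∀ j ∈ Finset.range n,
        0 ≤ ramp (v j) (v (j + 1)) s₂ - ramp (v j) (v (j + 1)) s₁ := fun j hj =>
      sub_nonneg.2 (monotone_ramp (hv j (Finset.mem_range.1 hj)).le hs)
    have htele : ∑ j ∈ Finset.range n, (ramp (v j) (v (j + 1)) s₂ - ramp (v j) (v (j + 1)) s₁)
        = (min s₂ (v n) - min s₁ (v n)) - (min s₂ (v 0) - min s₁ (v 0)) := by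
      simp only [ramp]
      rw [Finset.sum_sub_distrib, Finset.sum_range_sub (fun j => min s₂ (v j)),
        Finset.sum_range_sub (fun j => min s₁ (v j))]
      ring
    have hmin : ∀ c, min s₂ c - min s₁ c ≤ s₂ - s₁ ∧ 0 ≤ min s₂ c - min s₁ c := fun c => by
      simp only [min_def]; constructor <;> split_ifs <;> linarith
    rw [linInterp, linInterp, ← Finset.sum_sub_distrib]
    calc |∑ j ∈ Finset.range n, ((d (j + 1) - d j) / (v (j + 1) - v j) * ramp (v j) (v (j + 1)) s₂
            - (d (j + 1) - d j) / (v (j + 1) - v j) * ramp (v j) (v (j + 1)) s₁)|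
        ≤ ∑ j ∈ Finset.range n, K * (ramp (v j) (v (j + 1)) s₂ - ramp (v j) (v (j + 1)) s₁) := by
          refine (Finset.abs_sum_le_sum_abs _ _).trans (Finset.sum_le_sum fun j hj => ?_)
          rw [← mul_sub, abs_mul, abs_of_nonneg (hramp j hj)]
          exact mul_le_mul_of_nonneg_right (hK j (Finset.mem_range.1 hj)) (hramp j hj)
      _ ≤ K * (s₂ - s₁) := by
          rw [← Finset.mul_sum, htele]
          exact mul_le_mul_of_nonneg_left (by linarith [(hmin (v n)).1, (hmin (v 0)).2]) K.2
  refine LipschitzWith.of_dist_le_mul fun s₁ s₂ => ?_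
  rw [Real.dist_eq, Real.dist_eq]
  rcases le_total s₁ s₂ with h | h
  · rw [abs_sub_comm, abs_of_nonpos (sub_nonpos.2 h), neg_sub]; exact key s₁ s₂ h
  · rw [abs_of_nonneg (sub_nonneg.2 h)]; exact key s₂ s₁ h

end LinInterp

lemma abs_log_le_neg_log_one_sub {a z : ℝ} (hz : z < 1) (h₁ : 1 - z ≤ a) (h₂ : a ≤ 1 + z) :
    |Real.log a| ≤ -Real.log (1 - z) := by
  have hz' : 0 < 1 - z := by linarith
  rw [abs_le]
  constructor
  · linarith [Real.log_le_log hz' h₁]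
  · linarith [Real.log_le_sub_one_of_pos (hz'.trans_le h₁), Real.log_le_sub_one_of_pos hz']

theorem isLipTimeBij_id_add {g : ℝ → ℝ} {K : ℝ≥0} (hK : (K : ℝ) < 1) (hg : LipschitzWith K g)
    (hg0 : ∀ s ≤ 0, g s = 0) :
    IsLipTimeBij (fun s => s + g s) ∧ ∀ T, LogSlopeLe (fun s => s + g s) T (-Real.log (1 - K)) := by
  have hincr : ∀ s₁ s₂, s₁ ≤ s₂ →
      (1 - K) * (s₂ - s₁) ≤ (s₂ + g s₂) - (s₁ + g s₁) ∧
        (s₂ + g s₂) - (s₁ + g s₁) ≤ (1 + K) * (s₂ - s₁) := by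
    intro s₁ s₂ hs
    have h := hg.dist_le_mul s₂ s₁
    rw [Real.dist_eq, Real.dist_eq, abs_of_nonneg (sub_nonneg.2 hs), abs_le] at h
    constructor <;> linarith [h.1, h.2]
  have hmono : StrictMono (fun s => s + g s) := fun s₁ s₂ hs => by
    nlinarith [(hincr s₁ s₂ hs.le).1]
  have hsurj : Function.Surjective (fun s => s + g s) := by
    refine (continuous_id.add hg.continuous).surjective ?_ ?_
    · refine tendsto_atTop_mono' _ ?_ (tendsto_id.const_mul_atTop (sub_pos.2 hK))
      filter_upwards [eventually_ge_atTop 0] with s hs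
      simpa [hg0 0 le_rfl] using (hincr 0 s hs).1
    · refine tendsto_atBot_mono' _ ?_ tendsto_id
      filter_upwards [eventually_le_atBot 0] with s hs
      simp [hg0 s hs]
  have hlog : ∀ T, LogSlopeLe (fun s => s + g s) T (-Real.log (1 - K)) := by
    intro T s₁ s₂ _ hs _
    have hpos := sub_pos.2 hs
    obtain ⟨h₁, h₂⟩ := hincr s₁ s₂ hs.le
    exact abs_log_le_neg_log_one_sub hK ((le_div_iff₀ hpos).2 h₁) ((div_le_iff₀ hpos).2 h₂)
  exact ⟨⟨⟨hmono, hsurj, fun s hs => by simp [hg0 s hs]⟩, fun T _ => ⟨_, hlog T⟩⟩, hlog⟩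

theorem exists_lipTimeBij_eq_on_nodes {φ : ℝ → ℝ} (hφ0 : φ 0 = 0) {n : ℕ} {v : ℕ → ℝ}
    {r θ : ℝ} (hv0 : v 0 = 0) (hgap : ∀ j < n, v j + θ ≤ v (j + 1)) (hrθ : 2 * r < θ)
    (hclose : ∀ j ≤ n, |φ (v j) - v j| ≤ r) :
    ∃ l : ℝ → ℝ, IsLipTimeBij l ∧ (∀ T, LogSlopeLe l T (-Real.log (1 - 2 * r / θ))) ∧
      (∀ s, |l s - s| ≤ r) ∧ ∀ j ≤ n, l (v j) = φ (v j) := by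
  have hr : 0 ≤ r := by simpa [hv0, hφ0] using hclose 0 (Nat.zero_le n)
  have hθ : 0 < θ := by linarith
  have hv : ∀ j < n, v j < v (j + 1) := fun j hj => by linarith [hgap j hj]
  set d : ℕ → ℝ := fun j => φ (v j) - v j
  have hd0 : d 0 = 0 := by simp [d, hv0, hφ0]
  set K : ℝ≥0 := ⟨2 * r / θ, by positivity⟩
  have hK : (K : ℝ) < 1 := (div_lt_one hθ).2 hrθ
  have hslope : ∀ j < n, |(d (j + 1) - d j) / (v (j + 1) - v j)| ≤ K := by
    intro j hj
    have hΔ : θ ≤ v (j + 1) - v j := by linarith [hgap j hj]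
    rw [abs_div, abs_of_pos (hθ.trans_le hΔ)]
    calc |d (j + 1) - d j| / (v (j + 1) - v j) ≤ (2 * r) / θ := by
          gcongr
          exact (abs_sub _ _).trans (by linarith [hclose j (by omega), hclose (j + 1) hj])
      _ = K := rfl
  obtain ⟨hbij, hlog⟩ :=
    isLipTimeBij_id_add hK (lipschitzWith_linInterp hv hslope) fun s hs =>
      linInterp_of_le_first hv (hs.trans hv0.ge)
  refine ⟨_, hbij, hlog, fun s => by simpa using abs_linInterp_le hv hd0 hclose, fun j hj => ?_⟩
  simp [linInterp_node hv hj, hd0, d]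

lemma neg_log_one_sub_le {z ε : ℝ} (hz0 : 0 ≤ z) (hε : 0 ≤ ε) (hε' : ε ≤ 1 / 50)
    (hz : z ≤ 2 / 3 + ε) : -Real.log (1 - z) ≤ 3 * z + 10 * ε := by
  have h1 : 0 < 1 - z := by linarith
  have hexp : 1 ≤ (1 - z) * Real.exp (3 * z + 10 * ε) := by
    have : 1 ≤ (1 - z) * (1 + (3 * z + 10 * ε)) := by nlinarith
    exact this.trans (mul_le_mul_of_nonneg_left
      (by linarith [Real.add_one_le_exp (3 * z + 10 * ε)]) h1.le)
  have : Real.exp (-(3 * z + 10 * ε)) ≤ 1 - z := by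
    rw [Real.exp_neg, inv_le_iff_one_le_mul₀ (Real.exp_pos _)]
    linarith
  linarith [(Real.le_log_iff_exp_le h1).2 this]

lemma exists_uniform_gap {u : ℕ → ℝ} {δ ε : ℝ} (hε : 0 < ε) :
    ∀ {N : ℕ}, (∀ i < N, u i + δ < u (i + 1)) →
      ∃ θ, δ < θ ∧ θ ≤ δ + ε ∧ ∀ i < N, u i + θ ≤ u (i + 1)
  | 0, _ => ⟨δ + ε, by linarith, le_rfl, fun i hi => absurd hi (Nat.not_lt_zero i)⟩
  | N + 1, hgap => by
    obtain ⟨θ, hδθ, hθε, hθ⟩ := exists_uniform_gap (N := N) hε fun i hi => hgap i (by omega)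
    refine ⟨min θ (u (N + 1) - u N), lt_min hδθ (by linarith [hgap N (by omega)]),
      (min_le_left _ _).trans hθε, fun i hi => ?_⟩
    rcases Nat.lt_succ_iff_lt_or_eq.1 hi with hi | rfl
    · linarith [min_le_left θ (u (N + 1) - u N), hθ i hi]
    · linarith [min_le_right θ (u (i + 1) - u i)]

lemma exists_mem_Ico_succ {v : ℕ → ℝ} {s : ℝ} (hs : v 0 ≤ s) :
    ∀ {n : ℕ}, s < v n → ∃ j < n, s ∈ Ico (v j) (v (j + 1))
  | 0, h => absurd hs (not_le.2 h)
  | n + 1, h => by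
    by_cases hn : s < v n
    · obtain ⟨j, hj, hmem⟩ := exists_mem_Ico_succ hs hn
      exact ⟨j, by omega, hmem⟩
    · exact ⟨n, by omega, not_lt.1 hn, h⟩

/-- A final cell shorter than `θ` is dropped rather than merged with the previous one, so that
every new cell stays inside an old one. -/
lemma exists_coarsening {u : ℕ → ℝ} {θ c : ℝ} (hθ : 0 ≤ θ) (hu0 : u 0 = 0) (hc : 0 ≤ c) :
    ∀ {N : ℕ}, (∀ i < N, u i + θ ≤ u (i + 1)) → c ≤ u N →
      ∃ (n : ℕ) (v : ℕ → ℝ), v 0 = 0 ∧ (∀ j < n, v j + θ ≤ v (j + 1)) ∧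
        (∀ j < n, ∃ i < N, u i ≤ v j ∧ v (j + 1) ≤ u (i + 1)) ∧ v n ≤ c ∧
        (v n = c ∨ ∃ i < N, u i = v n ∧ c < u (i + 1) ∧ c < u N ∧ c ≤ v n + θ)
  | 0, _, hcN => ⟨0, u, hu0, fun _ h => absurd h (Nat.not_lt_zero _),
      fun _ h => absurd h (Nat.not_lt_zero _), by rw [hu0]; exact hc,
      Or.inl (le_antisymm (by rw [hu0]; exact hc) hcN)⟩
  | N + 1, hgap, hcN => by
    have hgapN := hgap N (Nat.lt_succ_self N)
    by_cases hcu : c ≤ u N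
    · obtain ⟨n, v, hv0, hvgap, hcell, hvc, hlast⟩ :=
        exists_coarsening (N := N) hθ hu0 hc (fun i hi => hgap i (by omega)) hcu
      refine ⟨n, v, hv0, hvgap, fun j hj => ?_, hvc, ?_⟩
      · obtain ⟨i, hi, h⟩ := hcell j hj
        exact ⟨i, by omega, h⟩
      · rcases hlast with h | ⟨i, hi, h₁, h₂, h₃, h₄⟩
        · exact Or.inl h
        · exact Or.inr ⟨i, by omega, h₁, h₂, by linarith, h₄⟩
    push Not at hcu
    by_cases hcθ : u N + θ ≤ c
    · refine ⟨N + 1, Function.update u (N + 1) c, by simp [hu0], fun j hj => ?_,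
        fun j hj => ⟨j, hj, ?_⟩, by simp, Or.inl (by simp)⟩
      · rcases Nat.lt_succ_iff_lt_or_eq.1 hj with hj | rfl
        · simpa [Function.update_of_ne (show j ≠ N + 1 by omega),
            Function.update_of_ne (show j + 1 ≠ N + 1 by omega)] using hgap j (by omega)
        · simpa [Function.update_of_ne (show j ≠ j + 1 by omega)] using hcθ
      · rcases Nat.lt_succ_iff_lt_or_eq.1 hj with hj | rfl
        · simp [Function.update_of_ne (show j ≠ N + 1 by omega),
            Function.update_of_ne (show j + 1 ≠ N + 1 by omega)]
        · simpa [Function.update_of_ne (show j ≠ j + 1 by omega)] using hcN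
    · push Not at hcθ
      refine ⟨N, u, hu0, fun j hj => hgap j (by omega), fun j hj => ⟨j, by omega, le_rfl, le_rfl⟩,
        hcu.le, Or.inr ⟨N, Nat.lt_succ_self N, rfl, by linarith, by linarith, hcθ.le⟩⟩

lemma exists_mem_Ico_apply_eq {f g : ℝ → ℝ} (hf : StrictMono f) (hg : StrictMono g)
    (hgs : Function.Surjective g) {a b s : ℝ} (ha : f a = g a) (hb : f b = g b)
    (hs : s ∈ Ico a b) : ∃ σ ∈ Ico a b, g σ = f s := by
  obtain ⟨σ, hσ⟩ := hgs (f s)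
  refine ⟨σ, ⟨hg.le_iff_le.1 ?_, hg.lt_iff_lt.1 ?_⟩, hσ⟩
  · rw [hσ, ← ha]; exact hf.monotone hs.1
  · rw [hσ, ← hb]; exact hf hs.2

section Metric

variable {X : Type*} [MetricSpace X]

@[simp] lemma dd_coe (a b : X) : dd dist (a : OnePoint X) (b : OnePoint X) = dist a b := rfl

@[simp] lemma dd_infty_left (b : OnePoint X) : dd dist OnePoint.infty b = 0 := rfl

@[simp] lemma dd_infty_right (a : OnePoint X) : dd dist a OnePoint.infty = 0 := by
  induction a using OnePoint.rec <;> rfl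

lemma dd_nonneg (a b : OnePoint X) : 0 ≤ dd dist a b := by
  induction a using OnePoint.rec <;> induction b using OnePoint.rec <;> simp [dist_nonneg]

lemma dd_triangle {a b c : OnePoint X} (hb : b ≠ OnePoint.infty) :
    dd dist a c ≤ dd dist a b + dd dist b c := by
  induction b using OnePoint.rec with
  | infty => exact absurd rfl hb
  | coe b =>
    induction a using OnePoint.rec <;> induction c using OnePoint.rec <;>
      simp [dist_nonneg, dist_triangle]

variable {t s : ℝ} {K : Set X} {x z : Path X}

lemma pen_infty (h : x s = OnePoint.infty) : pen dist t K x s = 0 := by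
  unfold pen; rw [h]; rfl

open Classical in
lemma pen_coe {a : X} (h : x s = a) :
    pen dist t K x s =
      if Kᶜ.Nonempty then min (Metric.infDist a Kᶜ) (max (t - s) 0) else max (t - s) 0 := by
  simp only [pen, h, Metric.infDist_eq_iInf, iInf, Set.image_eq_range]
  rfl

lemma pen_nonneg : 0 ≤ pen dist t K x s := by
  induction h : x s using OnePoint.rec with
  | infty => rw [pen_infty h]
  | coe a =>
    rw [pen_coe h]
    split_ifs
    · exact le_min Metric.infDist_nonneg (le_max_right _ _)
    · exact le_max_right _ _

lemma pen_nonpos_of_exit (h : ¬ (s ≤ t ∧ ∃ a ∈ K, x s = a)) : pen dist t K x s ≤ 0 := by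
  induction hx : x s using OnePoint.rec with
  | infty => rw [pen_infty hx]
  | coe a =>
    rw [pen_coe hx]
    by_cases hst : s ≤ t
    · have ha : a ∈ Kᶜ := fun haK => h ⟨hst, a, haK, hx⟩
      rw [if_pos ⟨a, ha⟩, Metric.infDist_zero_of_mem ha]
      exact min_le_left _ _
    · have : max (t - s) 0 = 0 := max_eq_right (by linarith)
      split_ifs <;> simp [this]

lemma pen_le_pen_add {s₁ s₂ : ℝ} (hx : x s₁ ≠ OnePoint.infty) :
    pen dist t K z s₂ ≤ pen dist t K x s₁ + max (dd dist (x s₁) (z s₂)) (s₁ - s₂) := by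
  obtain ⟨a, ha⟩ := OnePoint.ne_infty_iff_exists.1 hx
  induction hb : z s₂ using OnePoint.rec with
  | infty => rw [pen_infty hb]; exact add_nonneg pen_nonneg (le_max_of_le_left (dd_nonneg _ _))
  | coe b =>
    rw [pen_coe ha.symm, pen_coe hb, ← ha, dd_coe]
    set D := max (dist a b) (s₁ - s₂)
    have htime : max (t - s₂) 0 ≤ max (t - s₁) 0 + D :=
      max_le (by linarith [le_max_left (t - s₁) 0, le_max_right (dist a b) (s₁ - s₂)])
        (add_nonneg (le_max_right _ _) (le_max_of_le_left dist_nonneg))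
    split_ifs
    · rw [← min_add_add_right]
      refine min_le_min ?_ htime
      linarith [Metric.infDist_le_infDist_add_dist (x := b) (y := a) (s := Kᶜ), dist_comm a b,
        le_max_left (dist a b) (s₁ - s₂)]
    · exact htime

end Metric

lemma exists_partition_of_omegaMod_lt {Y : Type*} {ρ : Y → Y → ℝ} {t δ W : ℝ} {K : Set Y}
    {x : Path Y} (h : omegaMod ρ t K x δ < ENNReal.ofReal W) :
    ∃ (N : ℕ) (u : ℕ → ℝ), u 0 = 0 ∧ (∀ i < N, u i + δ < u (i + 1)) ∧
      (∀ s, 0 ≤ s → s < u N → x s ≠ OnePoint.infty) ∧ ¬ (u N ≤ t ∧ ∃ a ∈ K, x (u N) = a) ∧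
      ∀ i < N, ∀ s₁ ∈ Ico (u i) (u (i + 1)), ∀ s₂ ∈ Ico (u i) (u (i + 1)),
        dd ρ (x s₁) (x s₂) ≤ W := by
  have hW : 0 ≤ W := (ENNReal.ofReal_pos.1 (zero_le.trans_lt h)).le
  obtain ⟨⟨N, u⟩, hp⟩ := iInf_lt_iff.1 h
  obtain ⟨⟨hu0, hgap, hnex, hend⟩, hosc⟩ := iInf_lt_iff.1 hp
  refine ⟨N, u, hu0, hgap, hnex, hend, fun i hi s₁ ⟨hs₁, hs₁'⟩ s₂ ⟨hs₂, hs₂'⟩ => ?_⟩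
  rw [← ENNReal.ofReal_le_ofReal_iff hW]
  refine le_trans ?_ hosc.le
  exact le_iSup_of_le i (le_iSup_of_le hi (le_iSup_of_le s₁ (le_iSup_of_le ⟨hs₁, hs₁'⟩
    (le_iSup_of_le s₂ (le_iSup_of_le ⟨hs₂, hs₂'⟩ le_rfl)))))

section Skorokhod

variable {X : Type*} [MetricSpace X] {t : ℝ} {K : Set X} {x y : Path X}

lemma rhoSet_true_subset_false : rhoSet true dist t K x y ⊆ rhoSet false dist t K x y := by
  rintro r ⟨h0, t₁, t₂, l, h1, h2, h3, h4, h5, h6, h7, h8, -, h10, h11⟩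
  exact ⟨h0, t₁, t₂, l, h1, h2, h3, h4.1, h5, h6, h7, h8, nofun, h10, h11⟩

variable {N n : ℕ} {u v : ℕ → ℝ} {r θ w t₁ : ℝ}

lemma dd_le_of_coarsening {φ l : ℝ → ℝ} (hφ : StrictMono φ) (hφs : Function.Surjective φ)
    (hl : StrictMono l) (hnode : ∀ j ≤ n, l (v j) = φ (v j)) (hv0 : v 0 = 0)
    (hvmono : MonotoneOn v (Iic n))
    (hcell : ∀ j < n, ∃ i < N, u i ≤ v j ∧ v (j + 1) ≤ u (i + 1))
    (hosc : ∀ i < N, ∀ s₁ ∈ Ico (u i) (u (i + 1)), ∀ s₂ ∈ Ico (u i) (u (i + 1)),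
      dd dist (x s₁) (x s₂) ≤ w)
    (hxv : ∀ s, 0 ≤ s → s < v n → x s ≠ OnePoint.infty) (hvt₁ : v n ≤ t₁)
    (hd : ∀ s, 0 ≤ s → s < t₁ → dd dist (x s) (y (φ s)) ≤ r) {s : ℝ} (hs : 0 ≤ s)
    (hsv : s < v n) : dd dist (x s) (y (l s)) ≤ w + r := by
  obtain ⟨j, hj, hsj⟩ := exists_mem_Ico_succ (hv0 ▸ hs) hsv
  obtain ⟨σ, hσj, hσ⟩ := exists_mem_Ico_apply_eq hl hφ hφs (hnode j hj.le) (hnode (j + 1) hj) hsj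
  obtain ⟨i, hi, hui, hui'⟩ := hcell j hj
  have hvj : 0 ≤ v j := hv0 ▸ hvmono (mem_Iic.2 (Nat.zero_le n)) (mem_Iic.2 hj.le) (Nat.zero_le j)
  have hσv : σ < v n := hσj.2.trans_le (hvmono (mem_Iic.2 hj) (mem_Iic.2 le_rfl) hj)
  rw [← hσ]
  calc dd dist (x s) (y (φ σ)) ≤ dd dist (x s) (x σ) + dd dist (x σ) (y (φ σ)) :=
        dd_triangle (hxv σ (hvj.trans hσj.1) hσv)
    _ ≤ w + r := add_le_add
        (hosc i hi s ⟨hui.trans hsj.1, hsj.2.trans_le hui'⟩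
          σ ⟨hui.trans hσj.1, hσj.2.trans_le hui'⟩)
        (hd σ (hvj.trans hσj.1) (hσv.trans_le hvt₁))

lemma pen_le_of_coarsening {q : ℝ} (hw : 0 ≤ w) (ht₁ : 0 ≤ t₁) (hpx : pen dist t K x t₁ ≤ r)
    (hxN : ∀ s, 0 ≤ s → s < u N → x s ≠ OnePoint.infty)
    (hend : ¬ (u N ≤ t ∧ ∃ a ∈ K, x (u N) = a))
    (hosc : ∀ i < N, ∀ s₁ ∈ Ico (u i) (u (i + 1)), ∀ s₂ ∈ Ico (u i) (u (i + 1)),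
      dd dist (x s₁) (x s₂) ≤ w)
    (hqc : q ≤ min t₁ (u N))
    (hlast : q = min t₁ (u N) ∨ ∃ i < N, u i = q ∧ min t₁ (u N) < u (i + 1) ∧
      min t₁ (u N) < u N ∧ min t₁ (u N) ≤ q + θ) :
    pen dist t K x q ≤ r + max w θ := by
  rcases hlast with rfl | ⟨i, hi, huq, hcu, hcN, hcθ⟩
  · rcases min_choice t₁ (u N) with h | h <;> rw [h]
    · linarith [le_max_left w θ]
    · linarith [le_max_left w θ, pen_nonpos_of_exit (t := t) (K := K) hend,
        (pen_nonneg (t := t) (K := K) (x := x) (s := t₁)).trans hpx]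
  have hc : min t₁ (u N) = t₁ := min_eq_left ((min_lt_iff.1 hcN).resolve_right (lt_irrefl _)).le
  rw [hc] at hqc hcu hcN hcθ
  calc pen dist t K x q ≤ pen dist t K x t₁ + max (dd dist (x t₁) (x q)) (t₁ - q) :=
        pen_le_pen_add (hxN t₁ ht₁ hcN)
    _ ≤ r + max w θ := add_le_add hpx (max_le_max
        (hosc i hi t₁ ⟨huq ▸ hqc, hcu⟩ q ⟨huq.le, hqc.trans_lt hcu⟩) (by linarith))

lemma pen_comp_le_of_close {φ : ℝ → ℝ} {q t₂ p : ℝ} (hq0 : 0 ≤ q) (hqt₁ : q ≤ t₁)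
    (hφt₁ : φ t₁ = t₂) (hpy : pen dist t K y t₂ ≤ r)
    (hxt₁ : ∀ s, 0 ≤ s → s < t₁ → x s ≠ OnePoint.infty)
    (hd : ∀ s, 0 ≤ s → s < t₁ → dd dist (x s) (y (φ s)) ≤ r) (hq : |φ q - q| ≤ r)
    (hpx : pen dist t K x q ≤ p) : pen dist t K y (φ q) ≤ p + r := by
  rcases hqt₁.lt_or_eq with hlt | rfl
  · calc pen dist t K y (φ q) ≤ pen dist t K x q + max (dd dist (x q) (y (φ q))) (q - φ q) :=
          pen_le_pen_add (hxt₁ q hq0 hlt)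
      _ ≤ p + r := add_le_add hpx (max_le (hd q hq0 hlt) (by linarith [(abs_le.1 hq).1]))
  · rw [hφt₁]
    linarith [(pen_nonneg (t := t) (K := K) (x := x) (s := q)).trans hpx]

theorem rhoMet_le_of_partition (hr : r ∈ rhoSet false dist t K x y) (hrθ : 2 * r < θ) (hw : 0 ≤ w)
    (hu0 : u 0 = 0) (hgap : ∀ i < N, u i + θ ≤ u (i + 1))
    (hxN : ∀ s, 0 ≤ s → s < u N → x s ≠ OnePoint.infty)
    (hend : ¬ (u N ≤ t ∧ ∃ a ∈ K, x (u N) = a))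
    (hosc : ∀ i < N, ∀ s₁ ∈ Ico (u i) (u (i + 1)), ∀ s₂ ∈ Ico (u i) (u (i + 1)),
      dd dist (x s₁) (x s₂) ≤ w) :
    rhoMet dist t K x y ≤ max (-Real.log (1 - 2 * r / θ)) (2 * r + max w θ) := by
  obtain ⟨hr0, t₁, t₂, φ, ht₁, -, hφt₁, hφ, hxt₁, hyt₂, hd, hid, -, hpx, hpy⟩ := hr
  obtain ⟨hφmono, hφsurj, hφneg⟩ : IsTimeBij φ := hφ
  have hφ0 : φ 0 = 0 := hφneg 0 le_rfl
  have hθ : 0 < θ := by linarith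
  have huN : 0 ≤ u N := hu0 ▸ monotoneOn_Iic_of_add_le hθ.le hgap
    (mem_Iic.2 (Nat.zero_le N)) (mem_Iic.2 le_rfl) (Nat.zero_le N)
  obtain ⟨n, v, hv0, hvgap, hcell, hvc, hlast⟩ :=
    exists_coarsening hθ.le hu0 (le_min ht₁ huN) hgap (min_le_right t₁ (u N))
  have hvmono := monotoneOn_Iic_of_add_le hθ.le hvgap
  have hv : ∀ j ≤ n, 0 ≤ v j ∧ v j ≤ t₁ := fun j hj =>
    ⟨hv0 ▸ hvmono (mem_Iic.2 (Nat.zero_le n)) (mem_Iic.2 hj) (Nat.zero_le j),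
      (hvmono (mem_Iic.2 hj) (mem_Iic.2 le_rfl) hj).trans (hvc.trans (min_le_left _ _))⟩
  obtain ⟨hq0, hqt₁⟩ := hv n le_rfl
  obtain ⟨l, hl, hlog, hlid, hnode⟩ :=
    exists_lipTimeBij_eq_on_nodes hφ0 hv0 hvgap hrθ fun j hj => hid _ (hv j hj).1 (hv j hj).2
  have hxv : ∀ s, 0 ≤ s → s < v n → x s ≠ OnePoint.infty := fun s hs hsv =>
    hxN s hs (hsv.trans_le (hvc.trans (min_le_right _ _)))
  have hpxq : pen dist t K x (v n) ≤ r + max w θ :=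
    pen_le_of_coarsening hw ht₁ hpx hxN hend hosc hvc hlast
  have hpyq : pen dist t K y (φ (v n)) ≤ 2 * r + max w θ := by
    linarith [pen_comp_le_of_close hq0 hqt₁ hφt₁ hpy hxt₁ hd (hid _ hq0 hqt₁) hpxq]
  have hR : 2 * r + max w θ ≤ max (-Real.log (1 - 2 * r / θ)) (2 * r + max w θ) :=
    le_max_right _ _
  refine csInf_le ⟨0, fun _ h => h.1⟩ ⟨by linarith [le_max_left w θ], v n, φ (v n), l, hq0,
    hφ0 ▸ hφmono.monotone hq0, hnode n le_rfl, hl, hxv, fun s hs hsq => hyt₂ s hs ?_,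
    fun s hs hsq => ?_, fun s _ _ => ?_,
    fun _ s₁ s₂ h₁ h₂ h₃ => (hlog _ s₁ s₂ h₁ h₂ h₃).trans (le_max_left _ _), ?_, ?_⟩
  · exact hsq.trans_le (hφt₁ ▸ hφmono.monotone hqt₁)
  · linarith [le_max_left w θ, dd_le_of_coarsening hφmono hφsurj hl.1.1 hnode hv0 hvmono hcell
      hosc hxv hqt₁ hd hs hsq]
  · linarith [hlid s, le_max_left w θ]
  · linarith [le_max_left w θ]
  · exact hpyq.trans hR

theorem rhoMet_le_of_omegaMod_lt {W ε : ℝ} (hε : 0 < ε) (hε' : ε ≤ 1 / 100)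
    (hne : (rhoSet false dist t K x y).Nonempty) (hle : rhoTilde dist t K x y ≤ 1 / 9)
    (hW : omegaMod dist t K x (√(rhoTilde dist t K x y)) < ENNReal.ofReal W) :
    rhoMet dist t K x y ≤ 6 * max (√(rhoTilde dist t K x y)) W + 20 * ε := by
  set δ := √(rhoTilde dist t K x y)
  have hρ0 : 0 ≤ rhoTilde dist t K x y := le_csInf hne fun _ h => h.1
  have hδδ : δ * δ = rhoTilde dist t K x y := Real.mul_self_sqrt hρ0
  have hδ0 : 0 ≤ δ := Real.sqrt_nonneg _
  have hδ3 : δ ≤ 1 / 3 := by nlinarith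
  have hW0 : 0 < W := ENNReal.ofReal_pos.1 (zero_le.trans_lt hW)
  obtain ⟨N, u, hu0, hgap, hxN, hend, hosc⟩ := exists_partition_of_omegaMod_lt hW
  obtain ⟨θ, hδθ, hθε, hθgap⟩ := exists_uniform_gap hε hgap
  have hθ : 0 < θ := hδ0.trans_lt hδθ
  obtain ⟨r, hr, hrlt⟩ := Real.lt_sInf_add_pos hne (show 0 < ε * θ / 2 by positivity)
  replace hrlt : r < δ * δ + ε * θ / 2 := by rw [hδδ]; exact hrlt
  have hr2 : 2 * r ≤ (2 * δ + ε) * θ := by nlinarith [mul_le_mul_of_nonneg_left hδθ.le hδ0]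
  have hz0 : 0 ≤ 2 * r / θ := div_nonneg (by linarith [hr.1]) hθ.le
  have hz : 2 * r / θ ≤ 2 * δ + ε := (div_le_iff₀ hθ).2 hr2
  have hrθ : 2 * r < θ := by nlinarith
  refine (rhoMet_le_of_partition hr hrθ hW0.le hu0 hθgap hxN hend hosc).trans (max_le ?_ ?_)
  · have := neg_log_one_sub_le hz0 hε.le (by linarith) (by linarith)
    linarith [le_max_left δ W]
  · have hδθ' : δ * θ ≤ θ / 3 := by nlinarith
    have hεθ : ε * θ ≤ θ / 3 := by nlinarith
    have : max W θ ≤ max δ W + ε :=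
      max_le (by linarith [le_max_right δ W]) (by linarith [le_max_left δ W])
    nlinarith [le_max_left δ W]

theorem rhoMet_le_of_omegaMod_ne_top (hne : (rhoSet false dist t K x y).Nonempty)
    (hle : rhoTilde dist t K x y ≤ 1 / 9)
    (hΩ : omegaMod dist t K x (√(rhoTilde dist t K x y)) ≠ ⊤) :
    rhoMet dist t K x y ≤ 6 * max (√(rhoTilde dist t K x y))
      (omegaMod dist t K x (√(rhoTilde dist t K x y))).toReal := by
  set δ := √(rhoTilde dist t K x y)
  set Ω := omegaMod dist t K x δ
  refine le_of_forall_pos_le_add fun η hη => ?_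
  set ε := min (η / 26) (1 / 100)
  have hε : 0 < ε := by positivity
  have hΩε : Ω < ENNReal.ofReal (Ω.toReal + ε) := by
    rw [ENNReal.ofReal_add ENNReal.toReal_nonneg hε.le, ENNReal.ofReal_toReal hΩ]
    exact ENNReal.lt_add_right hΩ (ENNReal.ofReal_pos.2 hε).ne'
  have h := rhoMet_le_of_omegaMod_lt hε (min_le_right _ _) hne hle hΩε
  have : max δ (Ω.toReal + ε) ≤ max δ Ω.toReal + ε :=
    max_le (by linarith [le_max_left δ Ω.toReal]) (by linarith [le_max_right δ Ω.toReal])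
  linarith [min_le_left (η / 26) (1 / 100)]

end Skorokhod

theorem rhoMet_le_of_rhoTilde_le_general
    {S : Type*} [MetricSpace S]
    (t : ℝ) (K : Set S)
    (x y : Path S)
    (hle : rhoTilde dist t K x y ≤ 1 / 9) :
    ENNReal.ofReal (rhoMet dist t K x y) ≤
      6 * max (ENNReal.ofReal (Real.sqrt (rhoTilde dist t K x y)))
        (omegaMod dist t K x (Real.sqrt (rhoTilde dist t K x y))) := by
  set δ := Real.sqrt (rhoTilde dist t K x y)
  set Ω := omegaMod dist t K x δ
  rcases (rhoSet false dist t K x y).eq_empty_or_nonempty with hempty | hne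
  · have : rhoSet true dist t K x y = ∅ := subset_empty_iff.1 (hempty ▸ rhoSet_true_subset_false)
    simp [rhoMet, this]
  rcases eq_or_ne Ω ⊤ with hΩ | hΩ
  · simp [hΩ]
  calc ENNReal.ofReal (rhoMet dist t K x y) ≤ ENNReal.ofReal (6 * max δ Ω.toReal) :=
        ENNReal.ofReal_le_ofReal (rhoMet_le_of_omegaMod_ne_top hne hle hΩ)
    _ = 6 * max (ENNReal.ofReal δ) Ω := by
        rw [ENNReal.ofReal_mul (by norm_num), ENNReal.ofReal_max, ENNReal.ofReal_toReal hΩ]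
        norm_num

/-- Lemma 4.2. Let `x, y ∈ 𝔻_loc(S)`, `t ≥ 0` and `K ⊆ S` compact.  If
`ρ̃_{t,K}(x,y) ≤ 1/9`, then
`ρ_{t,K}(x,y) ≤ 6 · (√ρ̃_{t,K}(x,y) ∨ ω'_{t,K,x}(√ρ̃_{t,K}(x,y)))`. -/
theorem rhoMet_le_of_rhoTilde_le
    {S : Type*} [MetricSpace S] [SecondCountableTopology S] [LocallyCompactSpace S]
    (t : ℝ) (ht : 0 ≤ t) (K : Set S) (hK : IsCompact K)
    (x y : Path S) (hx : IsDloc x) (hy : IsDloc y)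
    (hle : rhoTilde dist t K x y ≤ 1 / 9) :
    ENNReal.ofReal (rhoMet dist t K x y) ≤
      6 * max (ENNReal.ofReal (Real.sqrt (rhoTilde dist t K x y)))
        (omegaMod dist t K x (Real.sqrt (rhoTilde dist t K x y))) :=
  rhoMet_le_of_rhoTilde_le_general t K x y hle

end LocSkor
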